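/- In the stack-rewriting system of the pushdown automaton M_N, from any stack of the form h_ij(s) :: γ with 1 ≤ s ≤ N − 1, the stack γ is reachable, and the sequence of symbols p_ab popped along the way (in order) is exactly the recursive Hanoi move sequence hanoi(s, i, j, k). -/

import Mathlib

/-- Stack symbols of the pushdown automaton `M_N`: `p i j`, `h i j n`, and the
start symbol `z0`.  Pegs are `Fin 3` (`0` = peg 1, `1` = peg 2, `2` = peg 3). -/
inductive SSym where
  | p : Fin 3 → Fin 3 → SSym
  | h : Fin 3 → Fin 3 → ℕ → SSym
  | z0 : SSym
deriving DecidableEq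

/-- One-step stack rewriting of `M_N`. -/
inductive SStep (N : ℕ) : List SSym → List SSym → Prop
  | start (γ : List SSym) :
      SStep N (SSym.z0 :: γ)
        (SSym.h 0 1 (N - 1) :: SSym.p 0 2 :: SSym.h 1 2 (N - 1) :: γ)
  | pop (i j : Fin 3) (γ : List SSym) : SStep N (SSym.p i j :: γ) γ
  | one (i j : Fin 3) (γ : List SSym) (hij : i ≠ j) :
      SStep N (SSym.h i j 1 :: γ) (SSym.p i j :: γ)
  | expand (i j k : Fin 3) (n : ℕ) (γ : List SSym)
      (hij : i ≠ j) (hjk : j ≠ k) (hki : k ≠ i) (h2 : 2 ≤ n) :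
      SStep N (SSym.h i j n :: γ)
        (SSym.h i k (n - 1) :: SSym.p i j :: SSym.h k j (n - 1) :: γ)

/-- The recursive Hanoi move sequence. -/
def hanoi : ℕ → Fin 3 → Fin 3 → Fin 3 → List (Fin 3 × Fin 3)
  | 0, _, _, _ => []
  | 1, i, j, _ => [(i, j)]
  | n + 2, i, j, k => hanoi (n + 1) i k j ++ [(i, j)] ++ hanoi (n + 1) k j i

/-- One-step stack rewriting of `M_N` together with its output: a `pop` of
`p i j` outputs the move `(i, j)`; all other steps output nothing. -/
inductive SStepO (N : ℕ) : List SSym → List (Fin 3 × Fin 3) → List SSym → Prop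
  | start (γ : List SSym) :
      SStepO N (SSym.z0 :: γ) []
        (SSym.h 0 1 (N - 1) :: SSym.p 0 2 :: SSym.h 1 2 (N - 1) :: γ)
  | pop (i j : Fin 3) (γ : List SSym) : SStepO N (SSym.p i j :: γ) [(i, j)] γ
  | one (i j : Fin 3) (γ : List SSym) (hij : i ≠ j) :
      SStepO N (SSym.h i j 1 :: γ) [] (SSym.p i j :: γ)
  | expand (i j k : Fin 3) (n : ℕ) (γ : List SSym)
      (hij : i ≠ j) (hjk : j ≠ k) (hki : k ≠ i) (h2 : 2 ≤ n) :
      SStepO N (SSym.h i j n :: γ) []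
        (SSym.h i k (n - 1) :: SSym.p i j :: SSym.h k j (n - 1) :: γ)

/-- `SRun N s out t`: a finite run of the stack machine from stack `s` to
stack `t` whose concatenated output is `out`. -/
inductive SRun (N : ℕ) : List SSym → List (Fin 3 × Fin 3) → List SSym → Prop
  | refl (s : List SSym) : SRun N s [] s
  | step {s t u : List SSym} {o o' : List (Fin 3 × Fin 3)} :
      SStepO N s o t → SRun N t o' u → SRun N s (o ++ o') u


lemma SRun.trans {N : ℕ} {s t u : List SSym} {o o' : List (Fin 3 × Fin 3)}
    (h1 : SRun N s o t) (h2 : SRun N t o' u) : SRun N s (o ++ o') u := by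
  induction h1 with
  | refl s => simpa using h2
  | step hst _ ih => rw [List.append_assoc]; exact SRun.step hst (ih h2)

lemma SRun.single {N : ℕ} {s t : List SSym} {o : List (Fin 3 × Fin 3)}
    (h : SStepO N s o t) : SRun N s o t := by
  simpa using SRun.step h (SRun.refl t)

lemma stack_run_hanoi_aux (N : ℕ) : ∀ (s : ℕ), 1 ≤ s →
    ∀ (i j k : Fin 3), i ≠ j → j ≠ k → k ≠ i → ∀ (γ : List SSym),
    SRun N (SSym.h i j s :: γ) (hanoi s i j k) γ := by
  intro s
  induction s using Nat.strong_induction_on with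
  | _ s ih =>
    intro hs i j k hij hjk hki γ
    match s, hs with
    | 1, _ =>
      have h1 : SRun N (SSym.p i j :: γ) [(i,j)] γ := SRun.single (SStepO.pop i j γ)
      simpa [hanoi] using SRun.step (SStepO.one i j γ hij) h1
    | (n+2), _ =>
      have e := SStepO.expand (N := N) i j k (n+2) γ hij hjk hki (by omega)
      replace e : SStepO N (SSym.h i j (n+2) :: γ) []
          (SSym.h i k (n + 1) :: SSym.p i j :: SSym.h k j (n + 1) :: γ) := e
      have r1 := ih (n+1) (by omega) (by omega) i k j hki.symm hjk.symm hij.symm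
        (SSym.p i j :: SSym.h k j (n + 1) :: γ)
      have r2 : SRun N (SSym.p i j :: SSym.h k j (n+1) :: γ) [(i,j)]
          (SSym.h k j (n+1) :: γ) := SRun.single (SStepO.pop i j _)
      have r3 := ih (n+1) (by omega) (by omega) k j i hjk.symm hij.symm hki.symm γ
      have := SRun.step e (r1.trans (r2.trans r3))
      simpa [hanoi, List.append_assoc] using this

/-- from any stack `h_ij(s) :: γ` with `1 ≤ s ≤ N - 1`, the
stack `γ` is reachable and the popped `p`-symbols, in order, form exactly the
recursive Hanoi sequence `hanoi s i j k`. -/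
theorem stack_run_hanoi (N s : ℕ) (hs : 1 ≤ s) (hsN : s ≤ N - 1)
    (i j k : Fin 3) (hij : i ≠ j) (hjk : j ≠ k) (hki : k ≠ i) (γ : List SSym) :
    SRun N (SSym.h i j s :: γ) (hanoi s i j k) γ :=
  stack_run_hanoi_aux N s hs i j k hij hjk hki γ
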